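/- arXiv:2107.13326 — 3 statements merged into one kernel-verified Lean document; each statement's English description precedes it below -/
import Mathlib

section
/- For every sufficiently small constant ε > 0 and every η > 0 there exists C > 0 such that the following holds. Let d ≥ 3 and n be integers with n/d ≥ C, let p = (1−ε)/d, and let G = (V,E) be any d-regular simple graph on n vertices. Then with probability at least 1 − η, every connected component of the induced subgraph G[V_p] has at most (4/ε²)·ln(n/d) vertices. -/
open scoped Classical

/-- Probability, under the product Bernoulli(p) measure on `V → Bool`, of the event `A`:
each vertex is included (value `true`) independently with probability `p`. -/
noncomputable def percProb {V : Type*} [Fintype V] [DecidableEq V] (p : ℝ)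
    (A : Set (V → Bool)) : ℝ :=
  ∑ ω : V → Bool, if ω ∈ A then (∏ v : V, if ω v = true then p else 1 - p) else 0

/-- The random vertex subset `V_p` determined by the sample `ω`. -/
def vertexSet {V : Type*} (ω : V → Bool) : Set V := {v | ω v = true}

/-- The percolated graph `G[V_p]`: the subgraph of `G` induced on the chosen vertices. -/
def percGraph {V : Type*} (G : SimpleGraph V) (ω : V → Bool) :
    SimpleGraph (vertexSet ω) :=
  G.induce (vertexSet ω)

/-- `G` is an `(n,d,λ)`-graph: it is `d`-regular and every vector orthogonal to the
constants has Rayleigh quotient at most `lam` in absolute value, which for a `d`-regular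
graph is equivalent to `max (|λ₂|, |λₙ|) ≤ lam` for the adjacency-matrix eigenvalues
`d = λ₁ ≥ λ₂ ≥ ⋯ ≥ λₙ`. -/
def IsNDLGraph {V : Type*} [Fintype V] (G : SimpleGraph V) (d : ℕ) (lam : ℝ) : Prop :=
  (∀ v : V, Nat.card (G.neighborSet v) = d) ∧
  ∀ f : V → ℝ, (∑ v : V, f v) = 0 →
    |∑ v : V, ∑ w : V, (if G.Adj v w then f v * f w else 0)| ≤ lam * ∑ v : V, (f v) ^ 2

/-- External neighbourhood of `S` in `G`: vertices outside `S` with a neighbour in `S`. -/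
def extNbhd {V : Type*} (G : SimpleGraph V) (S : Set V) : Set V :=
  {v | v ∉ S ∧ ∃ u ∈ S, G.Adj u v}

/-!
Explore the cluster of a vertex `v` of `G[V_p]` by breadth-first search, revealing one vertex at a
time. Every vertex found open adds at most `d` vertices to the frontier, so a cluster of more than
`k` vertices forces at least `k` open vertices among the first `d k` revealed ones. The Chernoff
bound with `e^t = 1 / (1 - ε)` makes this cost at most `exp (-k ε² / 2)`, which is `O((d / n)²)`
for `k ≈ (4 / ε²) ln (n / d)`. A union bound over the `n` vertices, each open with probability
`p < 1 / d`, gives `O(d / n)`.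
-/

open Finset Function Real

lemma Finset.piecewise_update_of_notMem {ι β : Type*} [DecidableEq ι] {s : Finset ι} {i : ι}
    (hi : i ∉ s) (f g : ι → β) (b : β) :
    s.piecewise f (update g i b) = (insert i s).piecewise (update f i b) g := by
  rw [← s.update_piecewise_of_notMem _ _ hi, piecewise_insert, update_self,
    s.piecewise_congr (fun j hj => update_of_ne (ne_of_mem_of_not_mem hj hi) _ _) fun _ _ => rfl]

lemma Finset.filter_insert_update_of_notMem {ι : Type*} [DecidableEq ι] {s : Finset ι} {i : ι}
    (hi : i ∉ s) (f : ι → Bool) (b : Bool) :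
    (insert i s).filter (fun j => update f i b j = true) =
      if b = true then insert i (s.filter fun j => f j = true)
      else s.filter fun j => f j = true := by
  rw [filter_insert, update_self,
    s.filter_congr fun j hj => by rw [update_of_ne (ne_of_mem_of_not_mem hj hi)]]

def LargeClusterAt {V : Type*} (G : SimpleGraph V) (k : ℕ) (v : V) (ω : V → Bool) : Prop :=
  ∃ hv : ω v = true, k ≤ Nat.card ((percGraph G ω).connectedComponentMk ⟨v, hv⟩).supp

lemma compl_iUnion_largeClusterAt_subset {V : Type*} (G : SimpleGraph V) {K : ℝ} (hK : 0 ≤ K) :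
    (⋃ v, {ω | LargeClusterAt G (⌊K⌋₊ + 1) v ω})ᶜ ⊆
      {ω | ∀ c : (percGraph G ω).ConnectedComponent, (Nat.card c.supp : ℝ) ≤ K} := by
  intro ω hω c
  by_contra! hc
  obtain ⟨x, rfl⟩ := c.exists_rep
  exact hω (Set.mem_iUnion.mpr ⟨x, x.2, Nat.floor_lt hK |>.mpr hc⟩)

section

variable {V : Type*} [Fintype V]

noncomputable def percWeight (p : ℝ) (ω : V → Bool) : ℝ :=
  ∏ v, if ω v = true then p else 1 - p

lemma percWeight_nonneg {p : ℝ} (hp₀ : 0 ≤ p) (hp₁ : p ≤ 1) (ω : V → Bool) :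
    0 ≤ percWeight p ω :=
  prod_nonneg fun v _ => by split_ifs <;> linarith

variable [DecidableEq V]

lemma sum_percWeight (p : ℝ) : ∑ ω : V → Bool, percWeight p ω = 1 := by
  simp only [percWeight,
    ← Fintype.prod_sum (fun (_ : V) (b : Bool) => if b = true then p else 1 - p),
    Fintype.sum_bool, if_true, Bool.false_eq_true, if_false, add_sub_cancel, prod_const_one]

lemma percProb_eq_sum_indicator (p : ℝ) (A : Set (V → Bool)) :
    percProb p A = ∑ ω, A.indicator (percWeight p) ω := by
  simp only [percProb, Set.indicator_apply, percWeight]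

lemma percProb_mono {p : ℝ} (hp₀ : 0 ≤ p) (hp₁ : p ≤ 1) {A B : Set (V → Bool)} (h : A ⊆ B) :
    percProb p A ≤ percProb p B := by
  simp only [percProb_eq_sum_indicator]
  exact sum_le_sum fun ω _ =>
    Set.indicator_le_indicator_of_subset h (percWeight_nonneg hp₀ hp₁) ω

lemma percProb_empty (p : ℝ) : percProb p (∅ : Set (V → Bool)) = 0 := by
  simp [percProb_eq_sum_indicator]

lemma percProb_compl (p : ℝ) (A : Set (V → Bool)) : percProb p Aᶜ = 1 - percProb p A := by
  simp only [percProb_eq_sum_indicator, eq_sub_iff_add_eq, ← sum_add_distrib,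
    Set.indicator_compl_add_self_apply, sum_percWeight]

lemma percProb_le_one {p : ℝ} (hp₀ : 0 ≤ p) (hp₁ : p ≤ 1) (A : Set (V → Bool)) :
    percProb p A ≤ 1 := by
  have := percProb_mono hp₀ hp₁ (Set.subset_univ A)
  rwa [← Set.compl_empty, percProb_compl, percProb_empty, sub_zero] at this

lemma percProb_iUnion_le {p : ℝ} (hp₀ : 0 ≤ p) (hp₁ : p ≤ 1) {ι : Type*} [Fintype ι]
    (A : ι → Set (V → Bool)) : percProb p (⋃ i, A i) ≤ ∑ i, percProb p (A i) := by
  simp only [percProb_eq_sum_indicator]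
  rw [sum_comm]
  refine sum_le_sum fun ω _ => ?_
  have hnonneg (j : ι) : 0 ≤ (A j).indicator (percWeight p) ω :=
    Set.indicator_nonneg (fun ω _ => percWeight_nonneg hp₀ hp₁ ω) ω
  by_cases hω : ω ∈ ⋃ i, A i
  · obtain ⟨i, hi⟩ := Set.mem_iUnion.mp hω
    rw [Set.indicator_of_mem hω, ← Set.indicator_of_mem hi (percWeight p)]
    exact single_le_sum (fun j _ => hnonneg j) (mem_univ i)
  · rw [Set.indicator_of_notMem hω]
    exact sum_nonneg fun j _ => hnonneg j

lemma percProb_eq_add_update (p : ℝ) (A : Set (V → Bool)) (v : V) :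
    percProb p A = p * percProb p {ω | update ω v true ∈ A}
      + (1 - p) * percProb p {ω | update ω v false ∈ A} := by
  set e := Equiv.funSplitAt v Bool
  have hsplit (F : (V → Bool) → ℝ) : ∑ ω, F ω = ∑ g, ∑ b, F (e.symm (b, g)) := by
    rw [← e.symm.sum_comp, Fintype.sum_prod_type, sum_comm]
  have hweight (b : Bool) (g : {u // u ≠ v} → Bool) : percWeight p (e.symm (b, g)) =
      (if b = true then p else 1 - p) * ∏ u, if g u = true then p else 1 - p := by
    rw [percWeight, Fintype.prod_eq_mul_prod_subtype_ne _ v]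
    congr 1
    · simp [e]
    · exact prod_congr rfl fun u _ => by simp [e, u.2]
  have hupdate (b c : Bool) (g : {u // u ≠ v} → Bool) :
      update (e.symm (b, g)) v c = e.symm (c, g) := by
    ext u
    by_cases hu : u = v
    · subst hu; simp [e]
    · simp [e, hu]
  simp only [percProb_eq_sum_indicator, hsplit (Set.indicator _ _), mul_sum, ← sum_add_distrib]
  refine sum_congr rfl fun g _ => ?_
  simp only [Fintype.sum_bool, Set.indicator_apply, Set.mem_ofPred_eq, hupdate, hweight]
  by_cases h₁ : e.symm (true, g) ∈ A <;> by_cases h₀ : e.symm (false, g) ∈ A <;>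
    simp [h₁, h₀] <;> ring

/-- `QueryBound N m E`: there is an adaptive strategy revealing at most `N` coordinates, one at a
time, such that `E` can only hold if at least `m` of the revealed coordinates are `true`. -/
inductive QueryBound : ℕ → ℕ → Set (V → Bool) → Prop
  | zero (N : ℕ) (E : Set (V → Bool)) : QueryBound N 0 E
  | empty (N m : ℕ) : QueryBound N m ∅
  | query {N m : ℕ} {E : Set (V → Bool)} (v : V) :
      QueryBound N m {ω | update ω v true ∈ E} →
      QueryBound N (m + 1) {ω | update ω v false ∈ E} → QueryBound (N + 1) (m + 1) E

lemma QueryBound.percProb_le_exp_mul_pow {p t : ℝ} (hp₀ : 0 ≤ p) (hp₁ : p ≤ 1) (ht : 0 ≤ t)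
    {N m : ℕ} {E : Set (V → Bool)} (h : QueryBound N m E) :
    percProb p E ≤ exp (-(t * m)) * (1 - p + p * exp t) ^ N := by
  have hbase : 1 ≤ 1 - p + p * exp t := by nlinarith [one_le_exp ht]
  induction h with
  | zero N E =>
    simpa using (percProb_le_one hp₀ hp₁ E).trans (one_le_pow₀ hbase)
  | empty N m =>
    rw [percProb_empty]
    positivity
  | @query N m E v _ _ ih₁ ih₀ =>
    rw [percProb_eq_add_update p E v]
    calc _ ≤ p * (exp (-(t * m)) * (1 - p + p * exp t) ^ N)
          + (1 - p) * (exp (-(t * ↑(m + 1))) * (1 - p + p * exp t) ^ N) := by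
          gcongr
      _ = exp (-(t * ↑(m + 1))) * (1 - p + p * exp t) ^ (N + 1) := by
          rw [show -(t * m) = -(t * ↑(m + 1)) + t by push_cast; ring, exp_add]
          ring

/-- The unrevealed vertices adjacent to a vertex revealed open, when the vertices of `X` have
been revealed, with states `ρ`. -/
noncomputable def exploreFrontier (G : SimpleGraph V) (X : Finset V) (ρ : V → Bool) :
    Finset V :=
  univ.filter fun w => w ∉ X ∧ ∃ u ∈ X, ρ u = true ∧ G.Adj u w

variable {G : SimpleGraph V} {X : Finset V} {ρ : V → Bool}

lemma largeClusterAt_piecewise_eq_empty {k : ℕ} {v : V} (hvX : v ∈ X) (hρv : ρ v = true)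
    (hF : exploreFrontier G X ρ = ∅) (hk : (X.filter fun u => ρ u = true).card < k) :
    {ω | LargeClusterAt G k v (X.piecewise ρ ω)} = ∅ := by
  refine Set.eq_empty_of_forall_notMem fun ω ⟨hv, hcard⟩ => hcard.not_gt (hk.trans_le' ?_)
  have hclosed (x : vertexSet (X.piecewise ρ ω))
      (hx : Relation.ReflTransGen (percGraph G (X.piecewise ρ ω)).Adj ⟨v, hv⟩ x) :
      (x : V) ∈ X.filter fun u => ρ u = true := by
    induction hx with
    | refl => exact mem_filter.mpr ⟨hvX, hρv⟩
    | @tail b c _ hbc ih =>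
      obtain ⟨hbX, hρb⟩ := mem_filter.mp ih
      have hcX : (c : V) ∈ X := by
        by_contra hcX
        have : (c : V) ∈ exploreFrontier G X ρ :=
          mem_filter.mpr ⟨mem_univ _, hcX, b, hbX, hρb, hbc⟩
        simp [hF] at this
      have hc : X.piecewise ρ ω c = true := c.2
      rw [piecewise_eq_of_mem _ _ _ hcX] at hc
      exact mem_filter.mpr ⟨hcX, hc⟩
  let f (x : ((percGraph G _).connectedComponentMk ⟨v, hv⟩).supp) :
      X.filter fun u => ρ u = true :=
    ⟨x.1, hclosed x.1 ((SimpleGraph.reachable_iff_reflTransGen _ _).mp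
      (SimpleGraph.ConnectedComponent.exact x.2).symm)⟩
  have hf : Injective f := fun x y hxy => by
    ext; simpa [f] using congrArg Subtype.val hxy
  exact (Nat.card_le_card_of_injective f hf).trans_eq (Nat.card_eq_finsetCard _)

lemma exploreFrontier_insert_update_true_subset {q : V} (hq : q ∈ exploreFrontier G X ρ) :
    exploreFrontier G (insert q X) (update ρ q true) ⊆
      (exploreFrontier G X ρ).erase q ∪ G.neighborFinset q := by
  intro w hw
  obtain ⟨-, hwX, u, huX, hρu, huw⟩ := mem_filter.mp hw
  rw [mem_insert, not_or] at hwX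
  rcases eq_or_ne u q with rfl | huq
  · exact mem_union_right _ ((G.mem_neighborFinset _ _).mpr huw)
  · rw [update_of_ne huq] at hρu
    exact mem_union_left _ (mem_erase.mpr ⟨hwX.1, mem_filter.mpr
      ⟨mem_univ _, hwX.2, u, (mem_insert.mp huX).resolve_left huq, hρu, huw⟩⟩)

variable (G X ρ) in
lemma exploreFrontier_insert_update_false_subset (q : V) :
    exploreFrontier G (insert q X) (update ρ q false) ⊆ (exploreFrontier G X ρ).erase q := by
  intro w hw
  obtain ⟨-, hwX, u, huX, hρu, huw⟩ := mem_filter.mp hw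
  rw [mem_insert, not_or] at hwX
  have huq : u ≠ q := by rintro rfl; simp at hρu
  rw [update_of_ne huq] at hρu
  exact mem_erase.mpr ⟨hwX.1, mem_filter.mpr
    ⟨mem_univ _, hwX.2, u, (mem_insert.mp huX).resolve_left huq, hρu, huw⟩⟩

/- `hN` is `#frontier + (m - 1) * d ≤ N` without truncated subtraction: the frontier, plus the at
most `d` new neighbours of each further open vertex needed after the next one, fits into the budget
of `N` queries. -/
lemma queryBound_largeClusterAt_piecewise {d : ℕ} (hdeg : ∀ u, G.degree u ≤ d) (k : ℕ)
    {v : V} (N m : ℕ) (hvX : v ∈ X) (hρv : ρ v = true)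
    (hk : (X.filter fun u => ρ u = true).card + m ≤ k)
    (hN : (exploreFrontier G X ρ).card + m * d ≤ N + d) :
    QueryBound N m {ω | LargeClusterAt G k v (X.piecewise ρ ω)} := by
  induction N using Nat.strong_induction_on generalizing m X ρ with
  | _ N ih =>
  rcases m with _ | m
  · exact .zero _ _
  rcases (exploreFrontier G X ρ).eq_empty_or_nonempty with hF | ⟨q, hq⟩
  · rw [largeClusterAt_piecewise_eq_empty hvX hρv hF (by omega)]
    exact .empty _ _
  have hqX : q ∉ X := (mem_filter.mp hq).2.1
  have hFpos := card_pos.mpr ⟨q, hq⟩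
  obtain ⟨N, rfl⟩ : ∃ N', N = N' + 1 := ⟨N - 1, by rw [Nat.succ_mul] at hN; omega⟩
  refine .query q ?_ ?_ <;>
    simp only [Set.mem_ofPred_eq, piecewise_update_of_notMem hqX]
  · refine ih N (by omega) m (mem_insert_of_mem hvX) (by simp [update_apply, hρv]) ?_ ?_
    · rw [filter_insert_update_of_notMem hqX, if_pos rfl]
      have := card_insert_le q (X.filter fun u => ρ u = true)
      omega
    · have h₁ := card_le_card (exploreFrontier_insert_update_true_subset hq)
      have h₂ := card_union_le ((exploreFrontier G X ρ).erase q) (G.neighborFinset q)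
      rw [card_erase_of_mem hq, G.card_neighborFinset_eq_degree] at h₂
      rw [Nat.succ_mul] at hN
      have := hdeg q
      omega
  · refine ih N (by omega) (m + 1) (mem_insert_of_mem hvX) ?_ ?_ ?_
    · rwa [update_of_ne (ne_of_mem_of_not_mem hvX hqX)]
    · rwa [filter_insert_update_of_notMem hqX, if_neg Bool.false_ne_true]
    · have h₁ := card_le_card (exploreFrontier_insert_update_false_subset G X ρ q)
      rw [card_erase_of_mem hq] at h₁
      omega

lemma percProb_largeClusterAt_le {p t : ℝ} (hp₀ : 0 ≤ p) (hp₁ : p ≤ 1) (ht : 0 ≤ t) {d : ℕ}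
    (hdeg : ∀ u, G.degree u ≤ d) (k : ℕ) (v : V) :
    percProb p {ω | LargeClusterAt G (k + 1) v ω} ≤
      p * (exp (-(t * k)) * (1 - p + p * exp t) ^ (d * k)) := by
  have hclosed : {ω | update ω v false ∈ {ω | LargeClusterAt G (k + 1) v ω}} = ∅ :=
    Set.eq_empty_of_forall_notMem fun ω ⟨hv, _⟩ => by simp at hv
  have hopen : {ω | update ω v true ∈ {ω | LargeClusterAt G (k + 1) v ω}} =
      {ω | LargeClusterAt G (k + 1) v (({v} : Finset V).piecewise (fun _ => true) ω)} := by
    simp only [piecewise_singleton, Set.mem_ofPred_eq]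
  have hF : exploreFrontier G {v} (fun _ => true) ⊆ G.neighborFinset v := fun w hw => by
    obtain ⟨-, -, u, hu, -, huw⟩ := mem_filter.mp hw
    rwa [mem_singleton.mp hu, ← G.mem_neighborFinset] at huw
  have hquery :
      QueryBound (d * k) k {ω | update ω v true ∈ {ω | LargeClusterAt G (k + 1) v ω}} := by
    rw [hopen]
    refine queryBound_largeClusterAt_piecewise hdeg (k + 1) (d * k) k (mem_singleton_self v) rfl
      (by simp [add_comm]) ?_
    have := (card_le_card hF).trans ((G.card_neighborFinset_eq_degree v).trans_le (hdeg v))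
    rw [mul_comm]
    omega
  rw [percProb_eq_add_update p _ v, hclosed, percProb_empty, mul_zero, add_zero]
  exact mul_le_mul_of_nonneg_left (hquery.percProb_le_exp_mul_pow hp₀ hp₁ ht) hp₀

end

lemma add_sq_div_two_le_neg_log_one_sub {ε : ℝ} (hε₀ : 0 ≤ ε) (hε₁ : ε < 1) :
    ε + ε ^ 2 / 2 ≤ -log (1 - ε) := by
  have hsum := hasSum_pow_div_log_of_abs_lt_one (by rwa [abs_of_nonneg hε₀])
  have := sum_le_hasSum (range 2) (fun i _ => by positivity) hsum
  norm_num [sum_range_succ] at this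
  linarith

lemma exp_mul_pow_le_of_subcritical {ε : ℝ} (hε₀ : 0 ≤ ε) (hε₁ : ε < 1) {d : ℕ} (hd : 0 < d)
    (k : ℕ) :
    exp (-(-log (1 - ε) * k)) * (1 - (1 - ε) / d + (1 - ε) / d * exp (-log (1 - ε))) ^ (d * k)
      ≤ exp (-(k * ε ^ 2 / 2)) := by
  have hd' : (0 : ℝ) < d := Nat.cast_pos.mpr hd
  have hbase : 1 - (1 - ε) / d + (1 - ε) / d * exp (-log (1 - ε)) = 1 + ε / d := by
    have : 1 - ε ≠ 0 := by linarith
    rw [exp_neg, exp_log (by linarith)]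
    field_simp
    ring
  have hpow : (1 + ε / d) ^ (d * k) ≤ exp (ε * k) := by
    calc (1 + ε / d) ^ (d * k) ≤ exp (ε / d) ^ (d * k) :=
          pow_le_pow_left₀ (by positivity) (by linarith [add_one_le_exp (ε / d)]) _
      _ = exp (ε * k) := by
          rw [← exp_nat_mul]
          push_cast
          field_simp
  have hlog := add_sq_div_two_le_neg_log_one_sub hε₀ hε₁
  rw [hbase]
  calc _ ≤ exp (-(-log (1 - ε) * k)) * exp (ε * k) := by gcongr
    _ = exp (-((-log (1 - ε) - ε) * k)) := by rw [← exp_add]; ring_nf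
    _ ≤ exp (-(k * ε ^ 2 / 2)) := by
        gcongr
        nlinarith [(Nat.cast_nonneg k : (0 : ℝ) ≤ k)]

lemma exp_neg_floor_mul_sq_le {ε r : ℝ} (hε₀ : 0 < ε) (hε₁ : ε < 1) (hr : 1 ≤ r) :
    exp (-(⌊4 / ε ^ 2 * log r⌋₊ * ε ^ 2 / 2)) ≤ 3 / r ^ 2 := by
  have hfloor := Nat.lt_floor_add_one (4 / ε ^ 2 * log r)
  have hK : (4 / ε ^ 2 * log r - 1) * (ε ^ 2 / 2) = 2 * log r - ε ^ 2 / 2 := by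
    field_simp
    ring
  calc exp (-(⌊4 / ε ^ 2 * log r⌋₊ * ε ^ 2 / 2)) ≤ exp (1 - 2 * log r) := by
        gcongr
        nlinarith [mul_le_mul_of_nonneg_right hfloor.le (by positivity : 0 ≤ ε ^ 2 / 2)]
    _ = exp 1 / r ^ 2 := by
        rw [exp_sub, show 2 * log r = log (r ^ 2) by rw [log_pow]; norm_num,
          exp_log (by positivity)]
    _ ≤ 3 / r ^ 2 := by
        gcongr
        linarith [exp_one_lt_d9]


lemma one_sub_div_natCast_mem_Icc {ε : ℝ} (hε₀ : 0 ≤ ε) (hε₁ : ε ≤ 1) {d : ℕ} (hd : 0 < d) :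
    (1 - ε) / d ∈ Set.Icc (0 : ℝ) 1 :=
  ⟨div_nonneg (by linarith) d.cast_nonneg,
    div_le_one_of_le₀ (by linarith [(Nat.one_le_cast.mpr hd : (1 : ℝ) ≤ d)]) d.cast_nonneg⟩

lemma percProb_iUnion_largeClusterAt_le {V : Type*} [Fintype V] [DecidableEq V]
    {G : SimpleGraph V} {ε r : ℝ} (hε₀ : 0 < ε) (hε₁ : ε < 1) {d : ℕ} (hd : 0 < d)
    (hdeg : ∀ u, G.degree u ≤ d) (hr : 1 ≤ r) :
    percProb ((1 - ε) / d) (⋃ v, {ω | LargeClusterAt G (⌊4 / ε ^ 2 * log r⌋₊ + 1) v ω}) ≤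
      Fintype.card V * ((1 - ε) / d * (3 / r ^ 2)) := by
  obtain ⟨hp₀, hp₁⟩ := one_sub_div_natCast_mem_Icc hε₀.le hε₁.le hd
  have ht : 0 ≤ -log (1 - ε) := neg_nonneg.mpr (log_nonpos (by linarith) (by linarith))
  have hvertex (v : V) := (percProb_largeClusterAt_le hp₀ hp₁ ht hdeg _ v).trans
    (mul_le_mul_of_nonneg_left ((exp_mul_pow_le_of_subcritical hε₀.le hε₁ hd _).trans
      (exp_neg_floor_mul_sq_le hε₀ hε₁ hr)) hp₀)
  simpa using (percProb_iUnion_le hp₀ hp₁ _).trans (sum_le_sum fun v _ => hvertex v)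

theorem subcritical_component_bound :
    ∃ ε₀ : ℝ, 0 < ε₀ ∧ ∀ ε : ℝ, 0 < ε → ε < ε₀ → ∀ η : ℝ, 0 < η →
    ∃ C : ℝ, 0 < C ∧ ∀ n d : ℕ, 3 ≤ d → C ≤ (n : ℝ) / d →
    ∀ G : SimpleGraph (Fin n), (∀ v, Nat.card (G.neighborSet v) = d) →
    1 - η ≤ percProb ((1 - ε) / d)
      {ω : Fin n → Bool | ∀ c : (percGraph G ω).ConnectedComponent,
        (Nat.card c.supp : ℝ) ≤ 4 / ε ^ 2 * Real.log ((n : ℝ) / d)} := by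
  refine ⟨1, one_pos, fun ε hε₀ hε₁ η hη => ⟨1 + 3 / η, by positivity, fun n d hd hC G hG => ?_⟩⟩
  have hdeg (u : Fin n) : G.degree u ≤ d := by
    rw [← G.card_neighborSet_eq_degree, ← Nat.card_eq_fintype_card, hG]
  obtain ⟨hp₀, hp₁⟩ := one_sub_div_natCast_mem_Icc hε₀.le hε₁.le (by omega : 0 < d)
  set r := (n : ℝ) / d with hr_def
  have hr : 1 ≤ r := le_trans (by linarith [div_pos three_pos hη]) hC
  have hbad := percProb_iUnion_largeClusterAt_le hε₀ hε₁ (by omega) hdeg hr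
  have hη' : (n : ℝ) * ((1 - ε) / d * (3 / r ^ 2)) ≤ η := by
    have h3 : 3 ≤ r * η := (div_le_iff₀ hη).mp (by linarith)
    calc (n : ℝ) * ((1 - ε) / d * (3 / r ^ 2)) = (1 - ε) * (3 / r) := by
          rw [hr_def]; field_simp
      _ ≤ 3 / r := mul_le_of_le_one_left (by positivity) (by linarith)
      _ ≤ η := (div_le_iff₀ (by linarith)).mpr (by linarith)
  rw [Fintype.card_fin] at hbad
  calc 1 - η ≤ 1 - percProb ((1 - ε) / d) _ := by linarith
    _ = _ := (percProb_compl _ _).symm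
    _ ≤ _ := percProb_mono hp₀ hp₁
      (compl_iUnion_largeClusterAt_subset G (mul_nonneg (by positivity) (log_nonneg hr)))
end

section
/- For every real ε with 0 < ε < 1/2, there exists a unique x ∈ (0,1) satisfying x = (1+ε)·(1 − exp(−x)); moreover this unique solution satisfies x > ln(1+ε). -/
open scoped Classical

/-!
Put `a = 1 + ε` and `g x = a (1 - exp (-x)) - x`. Since `exp` is strictly convex, `g` is strictly
concave, and as `g 0 = 0` it has at most one positive zero. Moreover
`g (log a) = a - 1 - log a > 0` and `g 1 < 0` (because `e < 3` and `a < 3/2`), so the intermediate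
value theorem puts that zero in `(log a, 1)`.
-/

open Real Set

section StrictConcaveZeros

variable {𝕜 β : Type*} [Field 𝕜] [LinearOrder 𝕜] [IsStrictOrderedRing 𝕜] [AddCommGroup β]
  [LinearOrder β] [IsOrderedAddMonoid β] [Module 𝕜 β] [PosSMulStrictMono 𝕜 β] {f : 𝕜 → β}

theorem StrictConcaveOn.pos_of_lt_of_apply_eq_zero (hf : StrictConcaveOn 𝕜 (Ici 0) f)
    (hf0 : f 0 = 0) {x y : 𝕜} (hx : 0 < x) (hxy : x < y) (hfy : f y = 0) : 0 < f x := by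
  have hy : 0 < y := hx.trans hxy
  have hseg : x ∈ openSegment 𝕜 0 y := by
    rw [openSegment_eq_Ioo hy]
    exact ⟨hx, hxy⟩
  simpa [hf0, hfy] using hf.lt_on_openSegment (mem_Ici.2 le_rfl) hy.le hy.ne hseg

theorem StrictConcaveOn.eq_of_pos_of_apply_eq_zero (hf : StrictConcaveOn 𝕜 (Ici 0) f)
    (hf0 : f 0 = 0) {x y : 𝕜} (hx : 0 < x) (hy : 0 < y) (hfx : f x = 0) (hfy : f y = 0) :
    x = y := by
  rcases lt_trichotomy x y with hxy | hxy | hxy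
  · exact absurd hfx (hf.pos_of_lt_of_apply_eq_zero hf0 hx hxy hfy).ne'
  · exact hxy
  · exact absurd hfy (hf.pos_of_lt_of_apply_eq_zero hf0 hy hxy hfx).ne'

end StrictConcaveZeros

theorem strictConcaveOn_mul_one_sub_exp_neg_sub {a : ℝ} (ha : 0 < a) :
    StrictConcaveOn ℝ univ fun x ↦ a * (1 - exp (-x)) - x := by
  refine ⟨convex_univ, fun x _ y _ hxy s t hs ht hst ↦ ?_⟩
  have hexp :=
    strictConvexOn_exp.2 (mem_univ (-x)) (mem_univ (-y)) (neg_injective.ne hxy) hs ht hst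
  simp only [smul_eq_mul] at hexp ⊢
  rw [show s * -x + t * -y = -(s * x + t * y) by ring] at hexp
  nlinarith [mul_lt_mul_of_pos_left hexp ha]

theorem eq_of_eq_mul_one_sub_exp_neg {a x y : ℝ} (ha : 0 < a) (hx : 0 < x) (hy : 0 < y)
    (hxa : x = a * (1 - exp (-x))) (hya : y = a * (1 - exp (-y))) : x = y :=
  ((strictConcaveOn_mul_one_sub_exp_neg_sub ha).subset (subset_univ _) (convex_Ici 0)
    ).eq_of_pos_of_apply_eq_zero (by simp) hx hy (sub_eq_zero.2 hxa.symm) (sub_eq_zero.2 hya.symm)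

theorem exists_mem_Ioo_log_eq_mul_one_sub_exp_neg {a : ℝ} (ha : 1 < a)
    (ha' : a * (1 - exp (-1)) < 1) : ∃ x ∈ Ioo (log a) 1, x = a * (1 - exp (-x)) := by
  set g : ℝ → ℝ := fun x ↦ a * (1 - exp (-x)) - x
  have hlog_lt : log a < a - 1 := log_lt_sub_one_of_pos (zero_lt_one.trans ha) ha.ne'
  have hg1 : g 1 < 0 := by simp only [g]; linarith
  have hglog : 0 < g (log a) := by
    simp only [g, exp_neg, exp_log (zero_lt_one.trans ha)]
    field_simp
    linarith
  have hlog : log a ≤ 1 := by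
    have he : exp (-1) < 1 / 2 := by
      rw [exp_neg, inv_lt_comm₀ (exp_pos 1) (by norm_num)]
      linarith [exp_one_gt_two]
    have ha2 : a < 2 := by nlinarith
    linarith
  obtain ⟨x, hx, hgx⟩ :=
    intermediate_value_Ioo' hlog (by fun_prop : ContinuousOn g (Icc (log a) 1)) ⟨hg1, hglog⟩
  exact ⟨x, hx, by simp only [g] at hgx; linarith⟩

theorem unique_solution_x :
    ∀ ε : ℝ, 0 < ε → ε < 1 / 2 →
    (∃! x : ℝ, x ∈ Set.Ioo (0 : ℝ) 1 ∧ x = (1 + ε) * (1 - Real.exp (-x))) ∧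
    (∀ x : ℝ, x ∈ Set.Ioo (0 : ℝ) 1 → x = (1 + ε) * (1 - Real.exp (-x)) →
      Real.log (1 + ε) < x) := by
  intro ε hε hε2
  have hg1 : (1 + ε) * (1 - exp (-1)) < 1 := by
    have : 1 / 3 < exp (-1) := by
      rw [exp_neg, lt_inv_comm₀ (by norm_num) (exp_pos 1)]
      linarith [exp_one_lt_three]
    nlinarith
  obtain ⟨x, hx, hxa⟩ := exists_mem_Ioo_log_eq_mul_one_sub_exp_neg (by linarith) hg1
  have hx0 : 0 < x := (log_pos (by linarith)).trans hx.1
  have huniq : ∀ z, 0 < z → z = (1 + ε) * (1 - exp (-z)) → z = x := fun z hz hza ↦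
    eq_of_eq_mul_one_sub_exp_neg (by linarith) hz hx0 hza hxa
  refine ⟨⟨x, ⟨⟨hx0, hx.2⟩, hxa⟩, fun z hz ↦ huniq z hz.1.1 hz.2⟩, fun z hz hza ↦ ?_⟩
  rw [huniq z hz.1 hza]
  exact hx.1
end

section
/- For every real ε with 0 < ε < 1/2, there exists a unique y ∈ (0,1) satisfying y·exp(−y) = (1+ε)·exp(−(1+ε)); moreover, writing x for the unique solution in (0,1) of x = (1+ε)·(1 − exp(−x)), one has x + y = 1 + ε. -/
open scoped Classical

/-!
Everything rests on the level sets of `f t = t * exp (-t)`, which increases on `(-∞, 1]`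
and decreases on `[1, ∞)`. Since `f 0 = 0 < f (1 + ε) < f 1`, the value `f (1 + ε)` is taken
exactly once in `(0, 1)`. If `x = (1 + ε) (1 - exp (-x))`, then `y = 1 + ε - x` equals
`(1 + ε) exp (-x)` and satisfies `f y = f (1 + ε)`; it is positive, and it is not in `[1, ∞)`
because there `f` takes the value `f (1 + ε)` only at `1 + ε`, while `x ≠ 0`.
-/

open Real Set

theorem hasDerivAt_mul_exp_neg (t : ℝ) :
    HasDerivAt (fun s : ℝ => s * exp (-s)) ((1 - t) * exp (-t)) t := by
  have hexp : HasDerivAt (fun s : ℝ => exp (-s)) (-exp (-t)) t := by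
    convert (hasDerivAt_neg t).exp using 1
    ring
  exact ((hasDerivAt_id' t).mul hexp).congr_deriv (by ring)

theorem strictMonoOn_mul_exp_neg : StrictMonoOn (fun t : ℝ => t * exp (-t)) (Iic 1) := by
  refine strictMonoOn_of_deriv_pos (convex_Iic 1) (by fun_prop) fun t ht => ?_
  rw [interior_Iic, mem_Iio] at ht
  rw [(hasDerivAt_mul_exp_neg t).deriv]
  exact mul_pos (by linarith) (exp_pos _)

theorem strictAntiOn_mul_exp_neg : StrictAntiOn (fun t : ℝ => t * exp (-t)) (Ici 1) := by
  refine strictAntiOn_of_deriv_neg (convex_Ici 1) (by fun_prop) fun t ht => ?_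
  rw [interior_Ici, mem_Ioi] at ht
  rw [(hasDerivAt_mul_exp_neg t).deriv]
  exact mul_neg_of_neg_of_pos (by linarith) (exp_pos _)

theorem existsUnique_mul_exp_neg_eq {a : ℝ} (ha : 1 < a) :
    ∃! y : ℝ, y ∈ Ioo (0 : ℝ) 1 ∧ y * exp (-y) = a * exp (-a) := by
  have hlt : a * exp (-a) < 1 * exp (-1) :=
    strictAntiOn_mul_exp_neg (mem_Ici.2 le_rfl) (mem_Ici.2 ha.le) ha
  have hpos : 0 * exp (-0) < a * exp (-a) := by
    rw [zero_mul]
    exact mul_pos (by linarith) (exp_pos _)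
  have hcont : ContinuousOn (fun t : ℝ => t * exp (-t)) (Icc 0 1) := by fun_prop
  obtain ⟨y, hy, hfy⟩ := intermediate_value_Ioo zero_le_one hcont ⟨hpos, hlt⟩
  refine ⟨y, ⟨hy, hfy⟩, fun z hz => ?_⟩
  exact strictMonoOn_mul_exp_neg.injOn (mem_Iic.2 hz.1.2.le) (mem_Iic.2 hy.2.le)
    (hz.2.trans hfy.symm)

theorem sub_mul_exp_neg_sub_eq {a x : ℝ} (hx : x = a * (1 - exp (-x))) :
    (a - x) * exp (-(a - x)) = a * exp (-a) := by
  have hax : a - x = a * exp (-x) := by linear_combination -hx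
  rw [show -(a - x) = x + -a by ring, exp_add, ← mul_assoc, hax, mul_assoc a, ← exp_add,
    neg_add_cancel, exp_zero, mul_one]

theorem sub_mem_Ioo_of_eq_mul_one_sub_exp_neg {a x : ℝ} (ha : 1 < a) (hx0 : x ≠ 0)
    (hx : x = a * (1 - exp (-x))) :
    a - x ∈ Ioo (0 : ℝ) 1 := by
  have hax : a - x = a * exp (-x) := by linear_combination -hx
  refine ⟨hax ▸ mul_pos (by linarith) (exp_pos _), lt_of_not_ge fun hge => hx0 ?_⟩
  have := strictAntiOn_mul_exp_neg.injOn (mem_Ici.2 hge) (mem_Ici.2 ha.le)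
    (sub_mul_exp_neg_sub_eq hx)
  linarith

theorem unique_solution_y :
    ∀ ε : ℝ, 0 < ε → ε < 1 / 2 →
    (∃! y : ℝ, y ∈ Set.Ioo (0 : ℝ) 1 ∧
      y * Real.exp (-y) = (1 + ε) * Real.exp (-(1 + ε))) ∧
    (∀ x : ℝ, x ∈ Set.Ioo (0 : ℝ) 1 → x = (1 + ε) * (1 - Real.exp (-x)) →
      ∀ y : ℝ, y ∈ Set.Ioo (0 : ℝ) 1 →
        y * Real.exp (-y) = (1 + ε) * Real.exp (-(1 + ε)) →
        x + y = 1 + ε) := by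
  intro ε hε _
  have ha : 1 < 1 + ε := by linarith
  refine ⟨existsUnique_mul_exp_neg_eq ha, fun x hx hxeq y hy hyeq => ?_⟩
  have hy_eq : y = 1 + ε - x :=
    (existsUnique_mul_exp_neg_eq ha).unique ⟨hy, hyeq⟩
      ⟨sub_mem_Ioo_of_eq_mul_one_sub_exp_neg ha hx.1.ne' hxeq,
        sub_mul_exp_neg_sub_eq hxeq⟩
  linarith
end
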